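/- Let a > 0 and let μ be a finite positive Borel measure on ℝ such that L(μ)(t) = ∫_ℝ e^{−λt} dμ(λ) is finite for all t ∈ [0,a], and set φ(t) := L(μ)(|t|) for |t| ≤ a. If L(μ)(a) ≤ L(μ)(t) for all t ∈ [0,a] (equivalently, for the convex function L(μ), the left derivative L(μ)′(a−) ≤ 0), then φ is reflection positive on [−a,a] and extends to a symmetric positive definite function on all of ℝ. -/

import Mathlib

open MeasureTheory Real

/-- A kernel `K` on a subset `S` is positive definite if all quadratic forms built
from finitely many points of `S` are nonnegative. -/
def PosDefKernel {α : Type*} (S : Set α) (K : α → α → ℝ) : Prop :=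
  ∀ (n : ℕ) (x : Fin n → α), (∀ i, x i ∈ S) →
    ∀ c : Fin n → ℝ, 0 ≤ ∑ i, ∑ j, c i * c j * K (x i) (x j)

/-- A function `φ` is reflection positive on `[-a,a]` if both kernels
`(s,t) ↦ φ((t-s)/2)` on `[-a,a]` and `(s,t) ↦ φ((t+s)/2)` on `(0,a)` are
positive definite. -/
def ReflectionPositive (a : ℝ) (φ : ℝ → ℝ) : Prop :=
  PosDefKernel (Set.Icc (-a) a) (fun s t => φ ((t - s) / 2)) ∧
  PosDefKernel (Set.Ioo 0 a) (fun s t => φ ((t + s) / 2))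

/-!
For each `l`, Taylor's formula for `exp (-l * ·)` at `a` with integral remainder gives
`exp (-l * min |t| a) = exp (-l * a) + l * exp (-l * a) * (a - |t|)₊`
`  + ∫₀ᵃ l² exp (-l * s) (s - |t|)₊ ds`.
Triangle functions `(s - |t|)₊` are positive definite, so after integration against `μ` each
term is a positive definite function of `t`: the only coefficient that may be negative,
`l * exp (-l * a)`, integrates to `-L(μ)'(a-)`, which is nonnegative since `L(μ)` is
minimal at `a`. Thus `g t = L(μ)(min |t| a)` is a positive definite extension of `φ`, and it
gives the first kernel; the second one is the Gram kernel of the functions `l ↦ exp (-l * s / 2)`.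
-/

open Filter Topology

namespace PosDefKernel

variable {α : Type*} {S : Set α} {K L : α → α → ℝ}

theorem congr (hK : PosDefKernel S K) (h : ∀ x ∈ S, ∀ y ∈ S, K x y = L x y) :
    PosDefKernel S L := by
  intro n x hx c
  simpa only [h _ (hx _) _ (hx _)] using hK n x hx c

theorem comp {β : Type*} {T : Set β} (hK : PosDefKernel S K) {f : β → α}
    (hf : Set.MapsTo f T S) :
    PosDefKernel T (fun s t => K (f s) (f t)) :=
  fun n x hx c => hK n (f ∘ x) (fun i => hf (hx i)) c

theorem add (hK : PosDefKernel S K) (hL : PosDefKernel S L) :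
    PosDefKernel S (fun x y => K x y + L x y) := by
  intro n x hx c
  simp only [mul_add, Finset.sum_add_distrib]
  exact add_nonneg (hK n x hx c) (hL n x hx c)

theorem const_mul (hK : PosDefKernel S K) {r : ℝ} (hr : 0 ≤ r) :
    PosDefKernel S (fun x y => r * K x y) := by
  intro n x hx c
  have h : ∑ i, ∑ j, c i * c j * (r * K (x i) (x j))
      = r * ∑ i, ∑ j, c i * c j * K (x i) (x j) := by
    simp only [Finset.mul_sum]
    exact Finset.sum_congr rfl fun i _ => Finset.sum_congr rfl fun j _ => by ring
  rw [h]
  exact mul_nonneg hr (hK n x hx c)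

end PosDefKernel

theorem posDefKernel_mul_self {α : Type*} (S : Set α) (f : α → ℝ) :
    PosDefKernel S (fun x y => f x * f y) := by
  intro n x _ c
  have h : ∑ i, ∑ j, c i * c j * (f (x i) * f (x j)) = (∑ i, c i * f (x i)) ^ 2 := by
    rw [sq, Finset.sum_mul_sum]
    exact Finset.sum_congr rfl fun i _ => Finset.sum_congr rfl fun j _ => by ring
  rw [h]
  exact sq_nonneg _

theorem posDefKernel_const {α : Type*} (S : Set α) {r : ℝ} (hr : 0 ≤ r) :
    PosDefKernel S (fun _ _ => r) := by
  simpa using (posDefKernel_mul_self S (fun _ => (1 : ℝ))).const_mul hr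

theorem PosDefKernel.integral {α ι : Type*} [MeasurableSpace ι] {ν : Measure ι} {S : Set α}
    {K : ι → α → α → ℝ} (hK : ∀ᵐ ω ∂ν, PosDefKernel S (K ω))
    (hint : ∀ x ∈ S, ∀ y ∈ S, Integrable (fun ω => K ω x y) ν) :
    PosDefKernel S (fun x y => ∫ ω, K ω x y ∂ν) := by
  intro n x hx c
  have hint' : ∀ i j, Integrable (fun ω => c i * c j * K ω (x i) (x j)) ν :=
    fun i j => (hint _ (hx i) _ (hx j)).const_mul _
  have h : ∑ i, ∑ j, c i * c j * ∫ ω, K ω (x i) (x j) ∂ν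
      = ∫ ω, ∑ i, ∑ j, c i * c j * K ω (x i) (x j) ∂ν := by
    rw [integral_finsetSum _ fun i _ => integrable_finsetSum _ fun j _ => hint' i j]
    refine Finset.sum_congr rfl fun i _ => ?_
    rw [integral_finsetSum _ fun j _ => hint' i j]
    simp only [integral_const_mul]
  rw [h]
  exact integral_nonneg_of_ae (hK.mono fun ω hω => hω n x hx c)

theorem Real.volume_real_Icc_inter_Icc_add (s p q : ℝ) :
    volume.real (Set.Icc p (p + s) ∩ Set.Icc q (q + s)) = max (s - |p - q|) 0 := by
  rw [measureReal_def, Set.Icc_inter_Icc, Real.volume_Icc, ENNReal.toReal_ofReal']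
  congr 1
  rw [abs_sub_comm, ← max_sub_min_eq_abs, min_add_add_right]
  ring

/-- The triangle function `t ↦ (s - |t|)₊` is the autocorrelation of the indicator of
an interval of length `s`. -/
theorem posDefKernel_max_sub_abs_sub (s : ℝ) :
    PosDefKernel Set.univ (fun x y => max (s - |x - y|) 0) := by
  let u : ℝ → ℝ → ℝ := fun x => (Set.Icc x (x + s)).indicator 1
  have hu : ∀ x y,
      (fun ω => u x ω * u y ω) = (Set.Icc x (x + s) ∩ Set.Icc y (y + s)).indicator 1 :=
    fun x y => by rw [Set.inter_indicator_one]; rfl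
  have hint : ∀ x ∈ Set.univ, ∀ y ∈ Set.univ, Integrable (fun ω => u x ω * u y ω) := by
    intro x _ y _
    rw [hu, integrable_indicator_iff (measurableSet_Icc.inter measurableSet_Icc)]
    exact integrableOn_const (measure_inter_lt_top_of_left_ne_top measure_Icc_lt_top.ne).ne
  refine (PosDefKernel.integral (ae_of_all _ fun ω => posDefKernel_mul_self _ fun x => u x ω)
    hint).congr fun x _ y _ => ?_
  rw [hu, integral_indicator_one (measurableSet_Icc.inter measurableSet_Icc),
    Real.volume_real_Icc_inter_Icc_add]

theorem posDefKernel_intervalIntegral_mul_max_sub_abs_sub {w : ℝ → ℝ} (hw : Continuous w)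
    {a b : ℝ} (hw0 : ∀ s ∈ Set.Ioc a b, 0 ≤ w s) (hab : a ≤ b) :
    PosDefKernel Set.univ (fun x y => ∫ s in a..b, w s * max (s - |x - y|) 0) := by
  simp only [intervalIntegral.integral_of_le hab]
  refine PosDefKernel.integral ?_ fun x _ y _ => ?_
  · exact (ae_restrict_iff' measurableSet_Ioc).2 (ae_of_all _ fun s hs =>
      (posDefKernel_max_sub_abs_sub s).const_mul (hw0 s hs))
  · exact (hw.mul ((continuous_id.sub continuous_const).max continuous_const)).integrableOn_Ioc

theorem integral_sq_mul_exp_neg_mul_mul_sub (l t a : ℝ) :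
    ∫ s in t..a, l ^ 2 * exp (-l * s) * (s - t)
      = exp (-l * t) - exp (-l * a) - l * exp (-l * a) * (a - t) := by
  have hderiv : ∀ s, HasDerivAt (fun s => -exp (-l * s) * (l * (s - t) + 1))
      (l ^ 2 * exp (-l * s) * (s - t)) s := by
    intro s
    have hexp : HasDerivAt (fun s => exp (-l * s)) (-l * exp (-l * s)) s := by
      simpa [mul_comm] using ((hasDerivAt_id s).const_mul (-l)).exp
    have hlin : HasDerivAt (fun s => l * (s - t) + 1) l s := by
      simpa using (((hasDerivAt_id s).sub_const t).const_mul l).add_const 1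
    exact (hexp.fun_neg.fun_mul hlin).congr_deriv (by ring)
  rw [intervalIntegral.integral_eq_sub_of_hasDerivAt (fun s _ => hderiv s)
    ((by fun_prop : Continuous _).intervalIntegrable _ _)]
  simp only [sub_self, mul_zero, zero_add, mul_one]
  ring

theorem exp_neg_mul_min_eq (l : ℝ) {t a : ℝ} (ht : 0 ≤ t) (ha : 0 ≤ a) :
    exp (-l * min t a)
      = exp (-l * a) + l * exp (-l * a) * max (a - t) 0
        + ∫ s in (0 : ℝ)..a, l ^ 2 * exp (-l * s) * max (s - t) 0 := by
  have hvanish : ∀ b, 0 ≤ b → b ≤ t →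
      ∫ s in (0 : ℝ)..b, l ^ 2 * exp (-l * s) * max (s - t) 0 = 0 := by
    intro b hb hbt
    refine (intervalIntegral.integral_congr fun s hs => ?_).trans intervalIntegral.integral_zero
    rw [Set.uIcc_of_le hb] at hs
    simp [max_eq_right (by linarith [hs.2] : s - t ≤ 0)]
  rcases le_total t a with hta | hat
  · have hcont : Continuous fun s => l ^ 2 * exp (-l * s) * max (s - t) 0 := by fun_prop
    rw [← intervalIntegral.integral_add_adjacent_intervals (b := t)
      (hcont.intervalIntegrable _ _) (hcont.intervalIntegrable _ _), hvanish t ht le_rfl,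
      intervalIntegral.integral_congr (g := fun s => l ^ 2 * exp (-l * s) * (s - t))
        fun s hs => ?_,
      integral_sq_mul_exp_neg_mul_mul_sub, min_eq_left hta, max_eq_left (sub_nonneg.2 hta)]
    · ring
    · rw [Set.uIcc_of_le hta] at hs
      simp only [max_eq_left (sub_nonneg.2 hs.1)]
  · rw [hvanish a ha hat, min_eq_right hat, max_eq_right (sub_nonpos.2 hat)]
    ring

theorem MeasureTheory.integrable_of_tendsto_of_monotone_of_integral_le {α : Type*}
    [MeasurableSpace α] {μ : Measure α} {f : ℕ → α → ℝ} {F : α → ℝ} {C : ℝ}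
    (hf : ∀ n, Integrable (f n) μ) (h_mono : ∀ᵐ x ∂μ, Monotone fun n => f n x)
    (h_tendsto : ∀ᵐ x ∂μ, Tendsto (fun n => f n x) atTop (𝓝 (F x)))
    (hC : ∀ n, ∫ x, f n x ∂μ ≤ C) :
    Integrable F μ ∧ ∫ x, F x ∂μ ≤ C := by
  have hg_nonneg : ∀ n, 0 ≤ᵐ[μ] fun x => f n x - f 0 x := fun n => by
    filter_upwards [h_mono] with x hx using sub_nonneg.2 (hx (Nat.zero_le n))
  have hG_nonneg : 0 ≤ᵐ[μ] fun x => F x - f 0 x := by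
    filter_upwards [h_mono, h_tendsto] with x hx hxF
    exact sub_nonneg.2 (ge_of_tendsto' hxF fun n => hx (Nat.zero_le n))
  have hG_lintegral : Tendsto (fun n => ∫⁻ x, ENNReal.ofReal (f n x - f 0 x) ∂μ) atTop
      (𝓝 (∫⁻ x, ENNReal.ofReal (F x - f 0 x) ∂μ)) := by
    refine lintegral_tendsto_of_tendsto_of_monotone
      (fun n => ((hf n).sub (hf 0)).aemeasurable.ennreal_ofReal) ?_ ?_
    · filter_upwards [h_mono] with x hx n m hnm
      exact ENNReal.ofReal_le_ofReal (sub_le_sub_right (hx hnm) _)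
    · filter_upwards [h_tendsto] with x hx
      exact (ENNReal.continuous_ofReal.tendsto _).comp (hx.sub_const _)
  have hG_le :
      ∫⁻ x, ENNReal.ofReal (F x - f 0 x) ∂μ ≤ ENNReal.ofReal (C - ∫ x, f 0 x ∂μ) := by
    refine le_of_tendsto' hG_lintegral fun n => ?_
    rw [← ofReal_integral_eq_lintegral_ofReal (f := fun x => f n x - f 0 x) ((hf n).sub (hf 0))
      (hg_nonneg n), integral_sub (hf n) (hf 0)]
    exact ENNReal.ofReal_le_ofReal (sub_le_sub_right (hC n) _)
  have hF_meas : AEStronglyMeasurable F μ :=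
    aestronglyMeasurable_of_tendsto_ae _ (fun n => (hf n).1) h_tendsto
  have hG_int : Integrable (fun x => F x - f 0 x) μ :=
    ⟨hF_meas.sub (hf 0).1, (hasFiniteIntegral_iff_ofReal hG_nonneg).2
      (hG_le.trans_lt ENNReal.ofReal_lt_top)⟩
  have hF_int : Integrable F μ := (hG_int.add (hf 0)).congr (ae_of_all _ fun x => by simp)
  exact ⟨hF_int, le_of_tendsto' (integral_tendsto_of_tendsto_of_monotone hf hF_int h_mono
    h_tendsto) hC⟩

theorem integrable_and_integral_nonneg_mul_exp_neg_mul {μ : Measure ℝ} {a : ℝ} (ha : 0 < a)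
    (hint : ∀ t ∈ Set.Icc (0 : ℝ) a, Integrable (fun l => exp (-l * t)) μ)
    (hmin : ∀ t ∈ Set.Icc (0 : ℝ) a,
      ∫ l, exp (-l * a) ∂μ ≤ ∫ l, exp (-l * t) ∂μ) :
    Integrable (fun l => l * exp (-l * a)) μ ∧ 0 ≤ ∫ l, l * exp (-l * a) ∂μ := by
  let t : ℕ → ℝ := fun n => a - a / (n + 1)
  have ht_mem : ∀ n, t n ∈ Set.Icc 0 a := fun n =>
    ⟨sub_nonneg.2 (div_le_self ha.le (by simp)), sub_le_self _ (by positivity)⟩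
  have ht_lt : ∀ n, t n < a := fun n => sub_lt_self _ (by positivity)
  have ht_mono : Monotone t := fun m n hmn => by
    dsimp only [t]
    gcongr
  have ht_tendsto : Tendsto t atTop (𝓝[≠] a) := by
    refine tendsto_nhdsWithin_of_tendsto_nhds_of_eventually_within _ ?_
      (Eventually.of_forall fun n => (ht_lt n).ne)
    simpa [t, div_eq_mul_inv] using tendsto_const_nhds.sub
      ((tendsto_one_div_add_atTop_nhds_zero_nat).const_mul a)
  -- left difference quotients at `a`: increasing in `n` by convexity, with integral `≤ 0`
  -- by minimality of the Laplace transform at `a`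
  let q : ℕ → ℝ → ℝ := fun n l => slope (fun t => exp (-l * t)) a (t n)
  have hq_int : ∀ n, Integrable (q n) μ := fun n =>
    ((hint _ (ht_mem n)).sub (hint a ⟨ha.le, le_rfl⟩)).const_mul _
  have hq_mono : ∀ l, Monotone fun n => q n l := by
    intro l m n hmn
    have hconvex : ConvexOn ℝ Set.univ fun t => exp (-l * t) :=
      convexOn_exp.comp_linearMap (LinearMap.lsmul ℝ ℝ (-l))
    exact hconvex.slope_mono (Set.mem_univ a) ⟨Set.mem_univ _, (ht_lt m).ne⟩
      ⟨Set.mem_univ _, (ht_lt n).ne⟩ (ht_mono hmn)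
  have hq_tendsto : ∀ l, Tendsto (fun n => q n l) atTop (𝓝 (-l * exp (-l * a))) := by
    intro l
    have hderiv : HasDerivAt (fun t => exp (-l * t)) (-l * exp (-l * a)) a := by
      simpa [mul_comm] using ((hasDerivAt_id a).const_mul (-l)).exp
    exact (hasDerivAt_iff_tendsto_slope.1 hderiv).comp ht_tendsto
  have hq_le : ∀ n, ∫ l, q n l ∂μ ≤ 0 := by
    intro n
    simp only [q, slope, vsub_eq_sub, smul_eq_mul]
    rw [integral_const_mul, integral_sub (hint _ (ht_mem n)) (hint a ⟨ha.le, le_rfl⟩)]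
    exact mul_nonpos_of_nonpos_of_nonneg (inv_nonpos.2 (sub_nonpos.2 (ht_lt n).le))
      (sub_nonneg.2 (hmin _ (ht_mem n)))
  obtain ⟨hF_int, hF_le⟩ := integrable_of_tendsto_of_monotone_of_integral_le hq_int
    (ae_of_all _ hq_mono) (ae_of_all _ hq_tendsto) hq_le
  refine ⟨hF_int.neg.congr (ae_of_all _ fun l => by simp), ?_⟩
  simpa [integral_neg] using hF_le

theorem posDefKernel_integral_exp_neg_mul_add {μ : Measure ℝ} {S : Set ℝ}
    (hint : ∀ s ∈ S, ∀ t ∈ S, Integrable (fun l => exp (-l * (s + t))) μ) :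
    PosDefKernel S (fun s t => ∫ l, exp (-l * (s + t)) ∂μ) := by
  have hsplit : ∀ l s t : ℝ, exp (-l * (s + t)) = exp (-l * s) * exp (-l * t) :=
    fun l s t => by rw [← exp_add, mul_add]
  simp only [hsplit] at hint ⊢
  exact PosDefKernel.integral (ae_of_all _ fun l => posDefKernel_mul_self S _) hint

theorem posDefKernel_integral_exp_neg_mul_min_abs_sub {μ : Measure ℝ} {a : ℝ} (ha : 0 < a)
    (hint : ∀ t ∈ Set.Icc (0 : ℝ) a, Integrable (fun l => exp (-l * t)) μ)
    (hmin : ∀ t ∈ Set.Icc (0 : ℝ) a,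
      ∫ l, exp (-l * a) ∂μ ≤ ∫ l, exp (-l * t) ∂μ) :
    PosDefKernel Set.univ (fun x y => ∫ l, exp (-l * min |x - y| a) ∂μ) := by
  obtain ⟨hD_int, hD_nonneg⟩ := integrable_and_integral_nonneg_mul_exp_neg_mul ha hint hmin
  have ha_int := hint a ⟨ha.le, le_rfl⟩
  let R : ℝ → ℝ → ℝ := fun l t =>
    ∫ s in (0 : ℝ)..a, l ^ 2 * exp (-l * s) * max (s - t) 0
  have htaylor : ∀ l x y, exp (-l * min |x - y| a)
      = exp (-l * a) + l * exp (-l * a) * max (a - |x - y|) 0 + R l |x - y| :=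
    fun l x y => exp_neg_mul_min_eq l (abs_nonneg _) ha.le
  have hR_int : ∀ x y, Integrable (fun l => R l |x - y|) μ := fun x y =>
    ((hint (min |x - y| a) ⟨le_min (abs_nonneg _) ha.le, min_le_right _ _⟩).sub
      (ha_int.add (hD_int.mul_const (max (a - |x - y|) 0)))).congr (ae_of_all _ fun l => by
        simp only [Pi.sub_apply, Pi.add_apply, htaylor l x y]
        ring)
  have hR : PosDefKernel Set.univ (fun x y => ∫ l, R l |x - y| ∂μ) :=
    PosDefKernel.integral (ae_of_all _ fun l => posDefKernel_intervalIntegral_mul_max_sub_abs_sub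
      (by fun_prop) (fun s _ => by positivity) ha.le) fun x _ y _ => hR_int x y
  have hL_nonneg : 0 ≤ ∫ l, exp (-l * a) ∂μ := integral_nonneg fun l => (exp_pos _).le
  refine (((posDefKernel_const _ hL_nonneg).add
    ((posDefKernel_max_sub_abs_sub a).const_mul hD_nonneg)).add hR).congr fun x _ y _ => ?_
  have hLD_int :
      Integrable (fun l => exp (-l * a) + l * exp (-l * a) * max (a - |x - y|) 0) μ :=
    ha_int.add (hD_int.mul_const _)
  simp only [htaylor]
  rw [integral_add hLD_int (hR_int x y),
    integral_add ha_int (hD_int.mul_const _), integral_mul_const]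

theorem reflection_positive_of_laplace_min_general (a : ℝ) (ha : 0 < a)
    (μ : Measure ℝ)
    (hint : ∀ t ∈ Set.Icc (0 : ℝ) a, Integrable (fun l => Real.exp (-l * t)) μ)
    (hmin : ∀ t ∈ Set.Icc (0 : ℝ) a,
      (∫ l, Real.exp (-l * a) ∂μ) ≤ ∫ l, Real.exp (-l * t) ∂μ) :
    ReflectionPositive a (fun t => ∫ l, Real.exp (-l * |t|) ∂μ) ∧
    ∃ g : ℝ → ℝ, (∀ t : ℝ, g (-t) = g t) ∧
      PosDefKernel (Set.univ : Set ℝ) (fun x y => g (x - y)) ∧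
      ∀ t ∈ Set.Icc (-a) a, g t = ∫ l, Real.exp (-l * |t|) ∂μ := by
  let g : ℝ → ℝ := fun t => ∫ l, exp (-l * min |t| a) ∂μ
  have hg_even : ∀ t, g (-t) = g t := fun t => by simp only [g, abs_neg]
  have hg_eq : ∀ t ∈ Set.Icc (-a) a, g t = ∫ l, exp (-l * |t|) ∂μ := fun t ht => by
    simp only [g, min_eq_left (abs_le.2 ht)]
  have hg : PosDefKernel Set.univ (fun x y => g (x - y)) :=
    posDefKernel_integral_exp_neg_mul_min_abs_sub ha hint hmin
  have hlaplace : PosDefKernel (Set.Icc 0 (a / 2)) (fun s t => ∫ l, exp (-l * (s + t)) ∂μ) :=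
    posDefKernel_integral_exp_neg_mul_add fun s hs t ht =>
      hint _ ⟨add_nonneg hs.1 ht.1, by linarith [hs.2, ht.2]⟩
  refine ⟨⟨?_, ?_⟩, g, hg_even, hg, hg_eq⟩
  · refine (hg.comp (f := (· / 2)) (Set.mapsTo_univ _ _)).congr fun s hs t ht => ?_
    rw [show s / 2 - t / 2 = -((t - s) / 2) by ring, hg_even,
      hg_eq _ ⟨by linarith [hs.2, ht.1], by linarith [hs.1, ht.2]⟩]
  · have hhalf : Set.MapsTo (· / 2) (Set.Ioo 0 a) (Set.Icc 0 (a / 2)) := fun s hs =>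
      ⟨by linarith [hs.1], by linarith [hs.2]⟩
    refine (hlaplace.comp hhalf).congr fun s hs t ht => ?_
    refine integral_congr_ae (ae_of_all _ fun l => ?_)
    simp only [abs_of_pos (by linarith [hs.1, ht.1] : 0 < (t + s) / 2)]
    ring_nf

/-- Let `μ` be a finite positive Borel measure on `ℝ` whose Laplace transform
`L(μ)(t) = ∫ e^{-λt} dμ(λ)` is finite on `[0,a]`, and set `φ(t) := L(μ)(|t|)`.
If `L(μ)` attains its minimum on `[0,a]` at `a` (equivalently `L(μ)'(a-) ≤ 0`),
then `φ` is reflection positive on `[-a,a]` and extends to a symmetric positive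
definite function on all of `ℝ`. -/
theorem reflection_positive_of_laplace_min (a : ℝ) (ha : 0 < a)
    (μ : Measure ℝ) (hfin : IsFiniteMeasure μ)
    (hint : ∀ t ∈ Set.Icc (0 : ℝ) a, Integrable (fun l => Real.exp (-l * t)) μ)
    (hmin : ∀ t ∈ Set.Icc (0 : ℝ) a,
      (∫ l, Real.exp (-l * a) ∂μ) ≤ ∫ l, Real.exp (-l * t) ∂μ) :
    ReflectionPositive a (fun t => ∫ l, Real.exp (-l * |t|) ∂μ) ∧
    ∃ g : ℝ → ℝ, (∀ t : ℝ, g (-t) = g t) ∧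
      PosDefKernel (Set.univ : Set ℝ) (fun x y => g (x - y)) ∧
      ∀ t ∈ Set.Icc (-a) a, g t = ∫ l, Real.exp (-l * |t|) ∂μ :=
  reflection_positive_of_laplace_min_general a ha μ hint hmin
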